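/- arXiv:2012.00487 — 5 statements merged into one kernel-verified Lean document; each statement's English description precedes it below -/
import Mathlib

section
/- Let n ≥ 2, let ε₀ ≥ 0 and σ be real numbers with σ ≥ (n−2)·π/2 + ε₀, and let λ₁ ≥ λ₂ ≥ … ≥ λₙ be real numbers with ∑_{i=1}^n arctan(λᵢ) = σ. Then λ_{n−1} + λₙ ≥ tan(ε₀/2). -/
/-!
Write `a = arctan x`, `b = arctan y` and `m = (a + b) / 2`. Clearing the positive denominators
`cos a`, `cos b`, `cos m`, the inequality `tan m ≤ x + y` becomes
`0 ≤ sin m * (1 - sin a * sin b)`, which holds as soon as `m ≥ 0`. Since every arctangent is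
below `π / 2`, the other `n - 2` terms of `∑ arctan λᵢ = σ` contribute less than `(n - 2) π / 2`,
so `arctan λ_{n-1} + arctan λₙ ≥ ε₀`, and `tan` is increasing on `[0, π / 2)`.
-/

open Real Finset

lemma tan_half_arctan_add_arctan_le_add {x y : ℝ} (h : 0 ≤ arctan x + arctan y) :
    tan ((arctan x + arctan y) / 2) ≤ x + y := by
  set a := arctan x
  set b := arctan y
  set m := (a + b) / 2 with hm_def
  have hca : 0 < cos a := cos_arctan_pos x
  have hcb : 0 < cos b := cos_arctan_pos y
  have hm : m ∈ Set.Ico 0 (π / 2) := by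
    constructor <;> linarith [hm_def, arctan_lt_pi_div_two x, arctan_lt_pi_div_two y]
  have hcm : 0 < cos m := cos_pos_of_mem_Ioo ⟨by linarith [pi_pos, hm.1], hm.2⟩
  have hsm : 0 ≤ sin m := sin_nonneg_of_nonneg_of_le_pi hm.1 (by linarith [pi_pos, hm.2])
  have hsab : sin a * sin b ≤ 1 := by
    nlinarith [abs_le.mp (abs_sin_le_one a), abs_le.mp (abs_sin_le_one b)]
  have hx : x = sin a / cos a := by rw [← tan_eq_sin_div_cos, tan_arctan]
  have hy : y = sin b / cos b := by rw [← tan_eq_sin_div_cos, tan_arctan]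
  have hab : a + b = 2 * m := by ring
  have hsin : sin a * cos b + cos a * sin b = 2 * sin m * cos m := by
    rw [← sin_add, hab, sin_two_mul]
  have hcos : cos a * cos b - sin a * sin b = 2 * cos m ^ 2 - 1 := by
    rw [← cos_add, hab, cos_two_mul]
  have key : (sin a * cos b + cos a * sin b) * cos m
      = sin m * (cos a * cos b) + sin m * (1 - sin a * sin b) := by
    linear_combination cos m * hsin - sin m * hcos
  rw [tan_eq_sin_div_cos, hx, hy, div_add_div _ _ hca.ne' hcb.ne',
    div_le_div_iff₀ hcm (mul_pos hca hcb), key]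
  exact le_add_of_nonneg_right (mul_nonneg hsm (sub_nonneg.mpr hsab))

lemma tan_half_le_add_of_le_arctan_add_arctan {x y ε : ℝ} (hε : 0 ≤ ε)
    (h : ε ≤ arctan x + arctan y) : tan (ε / 2) ≤ x + y := by
  refine le_trans ?_ (tan_half_arctan_add_arctan_le_add (hε.trans h))
  apply strictMonoOn_tan.monotoneOn
  · constructor <;> linarith [pi_pos, arctan_lt_pi_div_two x, arctan_lt_pi_div_two y]
  · constructor <;> linarith [arctan_lt_pi_div_two x, arctan_lt_pi_div_two y]
  · linarith

lemma sum_arctan_le_arctan_add_arctan_add {ι : Type*} [Fintype ι] [DecidableEq ι] (f : ι → ℝ)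
    {i j : ι} (hij : i ≠ j) :
    ∑ k, arctan (f k) ≤ arctan (f i) + arctan (f j) + ((Fintype.card ι : ℝ) - 2) * (π / 2) := by
  have hcard : ({i, j} : Finset ι)ᶜ.card = Fintype.card ι - 2 := by
    rw [card_compl, card_pair hij]
  have htwo : 2 ≤ Fintype.card ι := by
    simpa [card_pair hij] using card_le_univ ({i, j} : Finset ι)
  have hrest :
      ∑ k ∈ ({i, j} : Finset ι)ᶜ, arctan (f k) ≤ ((Fintype.card ι : ℝ) - 2) * (π / 2) := by
    calc ∑ k ∈ ({i, j} : Finset ι)ᶜ, arctan (f k)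
        ≤ ({i, j} : Finset ι)ᶜ.card • (π / 2) :=
          sum_le_card_nsmul _ _ _ fun k _ => (arctan_lt_pi_div_two _).le
      _ = ((Fintype.card ι : ℝ) - 2) * (π / 2) := by
          rw [hcard, nsmul_eq_mul, Nat.cast_sub htwo, Nat.cast_ofNat]
  rw [← sum_add_sum_compl {i, j}, sum_pair hij]
  linarith

/-- Wang–Yuan arithmetic lemma, part (i): if `λ₁ ≥ … ≥ λₙ` satisfy
`∑ arctan λᵢ = σ ≥ (n-2)π/2 + ε₀` with `ε₀ ≥ 0`, then
`λ_{n-1} + λₙ ≥ tan (ε₀/2)`. -/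
theorem dHYM_eigenvalue_pair_sum_lower_bound
    (n : ℕ) (hn : 2 ≤ n) (ε₀ σ : ℝ) (hε : 0 ≤ ε₀)
    (hσ : ((n : ℝ) - 2) * π / 2 + ε₀ ≤ σ)
    (lam : Fin n → ℝ)
    (hsum : ∑ i, Real.arctan (lam i) = σ) :
    Real.tan (ε₀ / 2) ≤ lam ⟨n - 2, by omega⟩ + lam ⟨n - 1, by omega⟩ := by
  have hne : (⟨n - 2, by omega⟩ : Fin n) ≠ ⟨n - 1, by omega⟩ := by
    rw [Ne, Fin.mk.injEq]
    omega
  have hpair := sum_arctan_le_arctan_add_arctan_add lam hne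
  rw [Fintype.card_fin, hsum] at hpair
  exact tan_half_le_add_of_le_arctan_add_arctan hε (by linarith)
end

section
/- Let n ≥ 2 and σ be a real number with σ ≥ (n−2)·π/2, and let λ₁ ≥ λ₂ ≥ … ≥ λₙ be real numbers with ∑_{i=1}^n arctan(λᵢ) = σ. Then for every k with 1 ≤ k ≤ n−1, the k-th elementary symmetric polynomial σ_k(λ) = ∑_{S ⊆ {1,…,n}, |S| = k} ∏_{i∈S} λᵢ is nonnegative. -/
/-!
If all `λᵢ ≥ 0` there is nothing to prove, so let `λ_{i₀} = -μ < 0`. As every `arctan` is below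
`π / 2`, the phase condition forces `arctan λⱼ ≥ arctan μ` for `j ≠ i₀`, so the remaining
`λ'` are positive; with `arctan x⁻¹ = π / 2 - arctan x` and subadditivity of `arctan` on
`[0, ∞)` it also gives `μ ∑ⱼ 1 / λ'ⱼ ≤ 1`. Now `σ_k(λ) = σ_k(λ') - μ σ_{k-1}(λ')`, and for
positive `λ'` and `k ≤ n - 1` one has `σ_{k-1}(λ') ≤ (∑ⱼ 1 / λ'ⱼ) σ_k(λ')`.
-/

open Real Finset

namespace Multiset

variable {R : Type*}

@[simp]
theorem esymm_zero [CommSemiring R] (s : Multiset R) : s.esymm 0 = 1 := by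
  simp [esymm]

theorem esymm_cons_succ [CommSemiring R] (a : R) (s : Multiset R) (k : ℕ) :
    (a ::ₘ s).esymm (k + 1) = s.esymm (k + 1) + a * s.esymm k := by
  simp [esymm, powersetCard_cons, sum_map_mul_left]

theorem esymm_nonneg [CommSemiring R] [PartialOrder R] [IsOrderedRing R] {s : Multiset R}
    (hs : ∀ x ∈ s, 0 ≤ x) (k : ℕ) : 0 ≤ s.esymm k :=
  sum_nonneg <| forall_mem_map_iff.2 fun _ ht ↦
    prod_nonneg fun x hx ↦ hs x (mem_of_le (mem_powersetCard.1 ht).1 hx)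

theorem esymm_le_sum_inv_mul_esymm_succ [Field R] [LinearOrder R] [IsStrictOrderedRing R]
    {s : Multiset R} (hs : ∀ x ∈ s, 0 < x) {k : ℕ} (hk : k < card s) :
    s.esymm k ≤ (s.map (·⁻¹)).sum * s.esymm (k + 1) := by
  induction s using Multiset.induction_on generalizing k with
  | empty => simp at hk
  | cons a s ih =>
    have ha : 0 < a := hs a (mem_cons_self a s)
    have hs' : ∀ x ∈ s, 0 < x := fun x hx ↦ hs x (mem_cons_of_mem hx)
    have hinv : 0 ≤ (s.map (·⁻¹)).sum :=
      sum_nonneg <| forall_mem_map_iff.2 fun x hx ↦ (inv_pos.2 (hs' x hx)).le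
    have hesymm (j : ℕ) : 0 ≤ s.esymm j := esymm_nonneg (fun x hx ↦ (hs' x hx).le) j
    have hcancel : a⁻¹ * a = 1 := inv_mul_cancel₀ ha.ne'
    rw [map_cons, sum_cons, esymm_cons_succ]
    cases k with
    | zero =>
      calc (a ::ₘ s).esymm 0 = a⁻¹ * a := by rw [esymm_zero, hcancel]
        _ ≤ a⁻¹ * s.esymm 1 + a⁻¹ * a + (s.map (·⁻¹)).sum * s.esymm 1
            + (s.map (·⁻¹)).sum * a := by
          nlinarith [mul_nonneg (inv_pos.2 ha).le (hesymm 1), mul_nonneg hinv (hesymm 1),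
            mul_nonneg hinv ha.le]
        _ = _ := by rw [esymm_zero]; ring
    | succ j =>
      have hj : s.esymm j ≤ (s.map (·⁻¹)).sum * s.esymm (j + 1) :=
        ih hs' (by simpa using hk)
      rw [esymm_cons_succ]
      calc s.esymm (j + 1) + a * s.esymm j
          ≤ a⁻¹ * a * s.esymm (j + 1) + a * ((s.map (·⁻¹)).sum * s.esymm (j + 1)) := by
            rw [hcancel, one_mul]; gcongr
        _ ≤ a⁻¹ * s.esymm (j + 2) + a⁻¹ * a * s.esymm (j + 1)
            + (s.map (·⁻¹)).sum * s.esymm (j + 2)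
            + a * ((s.map (·⁻¹)).sum * s.esymm (j + 1)) := by
          nlinarith [mul_nonneg (inv_pos.2 ha).le (hesymm (j + 2)),
            mul_nonneg hinv (hesymm (j + 2))]
        _ = _ := by ring

theorem esymm_cons_nonneg [Field R] [LinearOrder R] [IsStrictOrderedRing R]
    {s : Multiset R} (hs : ∀ x ∈ s, 0 < x) {a : R} (ha : -a * (s.map (·⁻¹)).sum ≤ 1)
    {k : ℕ} (hk : k ≤ card s) : 0 ≤ (a ::ₘ s).esymm k := by
  cases k with
  | zero => simp
  | succ k =>
    have hstep : s.esymm k ≤ (s.map (·⁻¹)).sum * s.esymm (k + 1) :=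
      esymm_le_sum_inv_mul_esymm_succ hs hk
    have hesymm (j : ℕ) : 0 ≤ s.esymm j := esymm_nonneg (fun x hx ↦ (hs x hx).le) j
    rw [esymm_cons_succ]
    rcases le_or_gt 0 a with ha₀ | ha₀
    · exact add_nonneg (hesymm _) (mul_nonneg ha₀ (hesymm k))
    · nlinarith [mul_le_mul_of_nonneg_left hstep (neg_nonneg.2 ha₀.le), hesymm (k + 1)]

end Multiset

namespace Real

theorem arctan_add_le_add_arctan {x y : ℝ} (hx : 0 ≤ x) (hy : 0 ≤ y) :
    arctan (x + y) ≤ arctan x + arctan y := by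
  rcases lt_or_ge (x * y) 1 with hxy | hxy
  · rw [arctan_add hxy]
    refine arctan_strictMono.monotone ((le_div_iff₀ (by linarith)).2 ?_)
    nlinarith [mul_nonneg (mul_nonneg hx hy) (add_nonneg hx hy)]
  · have hy₀ : 0 < y := lt_of_le_of_ne hy (by rintro rfl; simp at hxy; linarith)
    have hinv : arctan y⁻¹ ≤ arctan x :=
      arctan_strictMono.monotone ((inv_le_iff_one_le_mul₀ hy₀).2 (by linarith))
    rw [arctan_inv_of_pos hy₀] at hinv
    linarith [arctan_lt_pi_div_two (x + y)]

variable {ι : Type*} {s : Finset ι} {f : ι → ℝ} {μ : ℝ}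

theorem arctan_sum_le_sum_arctan (hf : ∀ i ∈ s, 0 ≤ f i) :
    arctan (∑ i ∈ s, f i) ≤ ∑ i ∈ s, arctan (f i) :=
  le_sum_of_subadditive_on_pred arctan (0 ≤ ·) arctan_zero.le
    (fun _ _ ↦ arctan_add_le_add_arctan) (fun _ _ ↦ add_nonneg) f hf

theorem le_of_add_arctan_le_sum_arctan
    (h : ((#s : ℝ) - 1) * (π / 2) + arctan μ ≤ ∑ i ∈ s, arctan (f i)) {j : ι} (hj : j ∈ s) :
    μ ≤ f j := by
  classical
  have hrest : ∑ i ∈ s.erase j, arctan (f i) ≤ ((#s : ℝ) - 1) * (π / 2) := by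
    have := sum_le_card_nsmul (s.erase j) (fun i ↦ arctan (f i)) (π / 2)
      fun i _ ↦ (arctan_lt_pi_div_two _).le
    rwa [nsmul_eq_mul, card_erase_of_mem hj, Nat.cast_pred (card_pos.2 ⟨j, hj⟩)] at this
  rw [← add_sum_erase s _ hj] at h
  exact arctan_strictMono.le_iff_le.1 (by linarith)

theorem mul_sum_inv_le_one_of_add_arctan_le_sum_arctan (hμ : 0 < μ)
    (h : ((#s : ℝ) - 1) * (π / 2) + arctan μ ≤ ∑ i ∈ s, arctan (f i)) :
    μ * ∑ i ∈ s, (f i)⁻¹ ≤ 1 := by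
  have hpos : ∀ i ∈ s, 0 < f i := fun i hi ↦ hμ.trans_le (le_of_add_arctan_le_sum_arctan h hi)
  have harctan : arctan (∑ i ∈ s, (f i)⁻¹) ≤ arctan μ⁻¹ := calc
    arctan (∑ i ∈ s, (f i)⁻¹) ≤ ∑ i ∈ s, arctan (f i)⁻¹ :=
      arctan_sum_le_sum_arctan fun i hi ↦ (inv_pos.2 (hpos i hi)).le
    _ = #s * (π / 2) - ∑ i ∈ s, arctan (f i) := by
      rw [sum_congr rfl fun i hi ↦ arctan_inv_of_pos (hpos i hi), sum_sub_distrib, sum_const,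
        nsmul_eq_mul]
    _ ≤ π / 2 - arctan μ := by linarith
    _ = arctan μ⁻¹ := (arctan_inv_of_pos hμ).symm
  rw [← le_div_iff₀' hμ, one_div]
  exact arctan_strictMono.le_iff_le.1 harctan

end Real

theorem dHYM_elementary_symmetric_nonneg_general
    (n : ℕ) (σ : ℝ)
    (hσ : ((n : ℝ) - 2) * π / 2 ≤ σ)
    (lam : Fin n → ℝ)
    (hsum : ∑ i, Real.arctan (lam i) = σ)
    (k : ℕ) (hk2 : k ≤ n - 1) :
    0 ≤ ∑ S ∈ Finset.powersetCard k (Finset.univ : Finset (Fin n)),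
        ∏ i ∈ S, lam i := by
  rw [← esymm_map_val]
  by_cases hnonneg : ∀ i, 0 ≤ lam i
  · exact Multiset.esymm_nonneg (Multiset.forall_mem_map_iff.2 fun i _ ↦ hnonneg i) k
  obtain ⟨i₀, hi₀⟩ : ∃ i₀, lam i₀ < 0 := by simpa using hnonneg
  have hcard : (#(univ.erase i₀) : ℝ) = n - 1 := by
    rw [card_erase_of_mem (mem_univ i₀), card_univ, Fintype.card_fin,
      Nat.cast_pred (Fin.pos i₀)]
  have harctan : ((#(univ.erase i₀) : ℝ) - 1) * (π / 2) + arctan (-lam i₀)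
      ≤ ∑ i ∈ univ.erase i₀, arctan (lam i) := by
    rw [← add_sum_erase _ _ (mem_univ i₀)] at hsum
    rw [arctan_neg, hcard]
    linarith
  have hpos : ∀ i ∈ univ.erase i₀, 0 < lam i := fun i hi ↦
    (neg_pos.2 hi₀).trans_le (le_of_add_arctan_le_sum_arctan harctan hi)
  rw [← insert_erase (mem_univ i₀), insert_val_of_notMem (notMem_erase i₀ _), Multiset.map_cons]
  refine Multiset.esymm_cons_nonneg (Multiset.forall_mem_map_iff.2 hpos) ?_ ?_
  · rw [Multiset.map_map, Function.comp_def, sum_map_val]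
    exact mul_sum_inv_le_one_of_add_arctan_le_sum_arctan (neg_pos.2 hi₀) harctan
  · simpa [card_erase_of_mem] using hk2

/-- Wang–Yuan arithmetic lemma, part (ii): if `λ₁ ≥ … ≥ λₙ` satisfy
`∑ arctan λᵢ = σ ≥ (n-2)π/2`, then the elementary symmetric polynomials
`σ_k(λ)` are nonnegative for `1 ≤ k ≤ n-1`. -/
theorem dHYM_elementary_symmetric_nonneg
    (n : ℕ) (hn : 2 ≤ n) (σ : ℝ)
    (hσ : ((n : ℝ) - 2) * π / 2 ≤ σ)
    (lam : Fin n → ℝ) (hlam : Antitone lam)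
    (hsum : ∑ i, Real.arctan (lam i) = σ)
    (k : ℕ) (hk1 : 1 ≤ k) (hk2 : k ≤ n - 1) :
    0 ≤ ∑ S ∈ Finset.powersetCard k (Finset.univ : Finset (Fin n)),
        ∏ i ∈ S, lam i :=
  dHYM_elementary_symmetric_nonneg_general n σ hσ lam hsum k hk2
end

section
/- Let n ≥ 1 and let σ be a real number with σ ≥ (n−2)·π/2. Then the superlevel set Γ^σ = { λ ∈ ℝⁿ : ∑_{i=1}^n arctan(λᵢ) > σ } is a convex subset of ℝⁿ. -/
open Real Finset


lemma arctan_add_le' {x y : ℝ} (hx : 0 ≤ x) (hy : 0 ≤ y) :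
    arctan (x + y) ≤ arctan x + arctan y := by
  rcases le_or_gt (π / 2) (arctan x + arctan y) with h | h
  · exact (arctan_lt_pi_div_two _).le.trans h
  · have hxy : x * y < 1 := by
      rcases eq_or_lt_of_le hx with h0 | hx0
      · simp [← h0]
      · have h2 : arctan y < arctan x⁻¹ := by
          rw [arctan_inv_of_pos hx0]; linarith
        have h3 : y < x⁻¹ := arctan_strictMono.lt_iff_lt.mp h2
        calc x * y < x * x⁻¹ := by exact mul_lt_mul_of_pos_left h3 hx0
        _ = 1 := mul_inv_cancel₀ hx0.ne'
    rw [arctan_add hxy]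
    apply arctan_strictMono.monotone
    rw [le_div_iff₀ (by nlinarith [mul_nonneg hx hy])]
    nlinarith [mul_nonneg (mul_nonneg hx hy) (add_nonneg hx hy)]

lemma arctan_sum_le' {ι : Type*} (s : Finset ι) (f : ι → ℝ) (hf : ∀ i ∈ s, 0 ≤ f i) :
    arctan (∑ i ∈ s, f i) ≤ ∑ i ∈ s, arctan (f i) := by
  induction s using Finset.cons_induction with
  | empty => simp
  | cons a s ha ih =>
      rw [Finset.sum_cons, Finset.sum_cons]
      have h1 : ∀ i ∈ s, 0 ≤ f i := fun i hi => hf i (Finset.mem_cons_of_mem hi)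
      calc arctan (f a + ∑ i ∈ s, f i)
          ≤ arctan (f a) + arctan (∑ i ∈ s, f i) :=
            arctan_add_le' (hf a (Finset.mem_cons_self a s)) (Finset.sum_nonneg h1)
        _ ≤ _ := add_le_add le_rfl (ih h1)

lemma weighted_cauchy {ι : Type*} (s : Finset ι) (w x : ι → ℝ) (hw : ∀ i ∈ s, 0 < w i) :
    (∑ i ∈ s, x i) ^ 2 ≤ (∑ i ∈ s, (w i)⁻¹) * (∑ i ∈ s, w i * x i ^ 2) := by
  have h := Finset.sum_mul_sq_le_sq_mul_sq s (fun i => (Real.sqrt (w i))⁻¹)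
    (fun i => Real.sqrt (w i) * x i)
  have e1 : ∀ i ∈ s, (Real.sqrt (w i))⁻¹ * (Real.sqrt (w i) * x i) = x i := by
    intro i hi
    have : Real.sqrt (w i) ≠ 0 := (Real.sqrt_pos.mpr (hw i hi)).ne'
    field_simp
  have e2 : ∀ i ∈ s, ((Real.sqrt (w i))⁻¹) ^ 2 = (w i)⁻¹ := by
    intro i hi
    rw [← Real.sq_sqrt (hw i hi).le]; rw [inv_pow]; ring_nf
    rw [Real.sq_sqrt (hw i hi).le]
  have e3 : ∀ i ∈ s, (Real.sqrt (w i) * x i) ^ 2 = w i * x i ^ 2 := by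
    intro i hi
    rw [mul_pow, Real.sq_sqrt (hw i hi).le]
  rw [Finset.sum_congr rfl e1, Finset.sum_congr rfl e2, Finset.sum_congr rfl e3] at h
  exact h

lemma key_ineq (n : ℕ) (lam : Fin n → ℝ) (g : ℝ)
    (h : ((n : ℝ) - 1) * (π / 2) ≤ (∑ i, arctan (lam i)) + arctan g)
    (d : Fin n → ℝ) :
    0 ≤ g * (∑ i, d i / (1 + lam i ^ 2)) ^ 2
      + ∑ i, lam i * d i ^ 2 / (1 + lam i ^ 2) ^ 2 := by
  have hpos2 : ∀ i : Fin n, (0:ℝ) < 1 + lam i ^ 2 := fun i => by positivity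
  have hbnd : ∀ (s : Finset (Fin n)), ∑ i ∈ s, arctan (lam i) ≤ (s.card : ℝ) * (π / 2) := by
    intro s
    calc ∑ i ∈ s, arctan (lam i) ≤ ∑ i ∈ s, π / 2 :=
          Finset.sum_le_sum fun i _ => (arctan_lt_pi_div_two _).le
      _ = (s.card : ℝ) * (π / 2) := by rw [Finset.sum_const, nsmul_eq_mul]
  have hX : ∀ i : Fin n, lam i * (d i / (1 + lam i ^ 2)) ^ 2
      = lam i * d i ^ 2 / (1 + lam i ^ 2) ^ 2 := by
    intro i; rw [div_pow]; ring
  rcases lt_or_ge g 0 with hg | hg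
  · -- g < 0 : all lam i ≥ -g > 0
    have hall : ∀ i : Fin n, -g ≤ lam i := by
      intro i
      have h1 : ∑ j ∈ univ.erase i, arctan (lam j) ≤ ((univ.erase i).card : ℝ) * (π/2) :=
        hbnd _
      have hcard : (((univ.erase i).card : ℕ) : ℝ) = (n:ℝ) - 1 := by
        rw [Finset.card_erase_of_mem (mem_univ i), Finset.card_univ, Fintype.card_fin,
          Nat.cast_sub (Fin.pos i)]
        simp
      rw [hcard] at h1
      have hsplit := Finset.sum_erase_add univ (fun j => arctan (lam j)) (mem_univ i)
      have : arctan (-g) ≤ arctan (lam i) := by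
        rw [arctan_neg]
        linarith
      exact arctan_strictMono.le_iff_le.mp this
    have hallpos : ∀ i : Fin n, 0 < lam i := fun i => lt_of_lt_of_le (by linarith) (hall i)
    have hinv : ∑ i, (lam i)⁻¹ ≤ (-g)⁻¹ := by
      have h1 : ∑ i, arctan (lam i)⁻¹ = (n:ℝ) * (π/2) - ∑ i, arctan (lam i) := by
        rw [Finset.sum_congr rfl fun i _ => arctan_inv_of_pos (hallpos i),
          Finset.sum_sub_distrib, Finset.sum_const, Finset.card_univ, Fintype.card_fin,
          nsmul_eq_mul]
      have h2 : arctan (∑ i, (lam i)⁻¹) ≤ arctan (-g)⁻¹ := by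
        calc arctan (∑ i, (lam i)⁻¹) ≤ ∑ i, arctan (lam i)⁻¹ :=
              arctan_sum_le' _ _ fun i _ => (inv_pos.mpr (hallpos i)).le
          _ ≤ arctan (-g)⁻¹ := by
              rw [h1, arctan_inv_of_pos (by linarith : (0:ℝ) < -g), arctan_neg]
              linarith
      exact arctan_strictMono.le_iff_le.mp h2
    have hC := weighted_cauchy univ lam (fun i => d i / (1 + lam i ^ 2)) (fun i _ => hallpos i)
    rw [Finset.sum_congr rfl fun i _ => hX i] at hC
    set S := ∑ i, d i / (1 + lam i ^ 2) with hS
    set X := ∑ i, lam i * d i ^ 2 / (1 + lam i ^ 2) ^ 2 with hXdef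
    have hXnn : 0 ≤ X := Finset.sum_nonneg fun i _ => by
      have := hallpos i; have := hpos2 i; positivity
    have hrnn : 0 ≤ ∑ i, (lam i)⁻¹ := Finset.sum_nonneg fun i _ => (inv_pos.mpr (hallpos i)).le
    have hgpos : (0:ℝ) < -g := by linarith
    have h5 : (-g) * (∑ i, (lam i)⁻¹) ≤ 1 := by
      calc (-g) * (∑ i, (lam i)⁻¹) ≤ (-g) * (-g)⁻¹ :=
            mul_le_mul_of_nonneg_left hinv hgpos.le
        _ = 1 := mul_inv_cancel₀ hgpos.ne'
    nlinarith [mul_le_mul_of_nonneg_left hC hgpos.le,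
      mul_le_mul_of_nonneg_right h5 hXnn]
  · by_cases hex : ∃ k, lam k < 0
    · obtain ⟨k, hk⟩ := hex
      have hkcard : (((univ.erase k).card : ℕ) : ℝ) = (n:ℝ) - 1 := by
        rw [Finset.card_erase_of_mem (mem_univ k), Finset.card_univ, Fintype.card_fin,
          Nat.cast_sub (Fin.pos k)]
        simp
      have hsplitk := Finset.sum_erase_add univ (fun j => arctan (lam j)) (mem_univ k)
      have herasebnd : ∑ j ∈ univ.erase k, arctan (lam j) ≤ ((n:ℝ) - 1) * (π/2) := by
        have := hbnd (univ.erase k); rwa [hkcard] at this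
      have hgk : -lam k ≤ g := by
        have : arctan (-lam k) ≤ arctan g := by
          rw [arctan_neg]; linarith
        exact arctan_strictMono.le_iff_le.mp this
      have hgpos : 0 < g := lt_of_lt_of_le (by linarith) hgk
      have hipos : ∀ i ∈ univ.erase k, 0 < lam i := by
        intro i hi
        have hik : i ≠ k := (Finset.mem_erase.mp hi).1
        have hsplit2 := Finset.sum_erase_add (univ.erase k) (fun j => arctan (lam j)) hi
        have hcard2 : ((((univ.erase k).erase i).card : ℕ) : ℝ) = (n:ℝ) - 2 := by
          rw [Finset.card_erase_of_mem hi, Finset.card_erase_of_mem (mem_univ k),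
            Finset.card_univ, Fintype.card_fin]
          have h2n : 2 ≤ n := by
            by_contra hc
            push_neg at hc
            interval_cases n
            · exact Fin.elim0 i
            · exact hik (Fin.ext (by omega))
          rw [Nat.cast_sub (by omega), Nat.cast_sub (by omega)]
          push_cast; ring
        have h3 : ∑ j ∈ (univ.erase k).erase i, arctan (lam j) ≤ ((n:ℝ) - 2) * (π/2) := by
          have := hbnd ((univ.erase k).erase i); rwa [hcard2] at this
        have h4 : arctan (-lam k) < arctan (lam i) := by
          rw [arctan_neg]
          have hg2 : arctan g < π/2 := arctan_lt_pi_div_two g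
          linarith
        have : -lam k < lam i := arctan_strictMono.lt_iff_lt.mp h4
        linarith
      have hlknpos : (0:ℝ) < -lam k := by linarith
      -- the inverse-sum inequality
      have hinv2 : g⁻¹ + ∑ i ∈ univ.erase k, (lam i)⁻¹ ≤ (-lam k)⁻¹ := by
        have h1 : ∑ i ∈ univ.erase k, arctan (lam i)⁻¹
            = ((n:ℝ) - 1) * (π/2) - ∑ i ∈ univ.erase k, arctan (lam i) := by
          rw [Finset.sum_congr rfl fun i hi => arctan_inv_of_pos (hipos i hi),
            Finset.sum_sub_distrib, Finset.sum_const, nsmul_eq_mul, hkcard]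
        have h2 : arctan (g⁻¹ + ∑ i ∈ univ.erase k, (lam i)⁻¹) ≤ arctan (-lam k)⁻¹ := by
          have hinvnn : ∀ i ∈ univ.erase k, (0:ℝ) ≤ (lam i)⁻¹ :=
            fun i hi => (inv_pos.mpr (hipos i hi)).le
          calc arctan (g⁻¹ + ∑ i ∈ univ.erase k, (lam i)⁻¹)
              ≤ arctan g⁻¹ + arctan (∑ i ∈ univ.erase k, (lam i)⁻¹) :=
                arctan_add_le' (inv_pos.mpr hgpos).le (Finset.sum_nonneg hinvnn)
            _ ≤ arctan g⁻¹ + ∑ i ∈ univ.erase k, arctan (lam i)⁻¹ :=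
                add_le_add le_rfl (arctan_sum_le' _ _ hinvnn)
            _ ≤ arctan (-lam k)⁻¹ := by
                rw [h1, arctan_inv_of_pos hgpos, arctan_inv_of_pos hlknpos, arctan_neg]
                linarith
        exact arctan_strictMono.le_iff_le.mp h2
      -- Cauchy–Schwarz with the modified weights
      set S := ∑ i, d i / (1 + lam i ^ 2) with hS
      set W : Fin n → ℝ := fun i => if i = k then g else lam i with hW
      set Y : Fin n → ℝ := fun i => if i = k then S else -(d i / (1 + lam i ^ 2)) with hY
      have hWpos : ∀ i ∈ univ, 0 < W i := by
        intro i _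
        by_cases hik : i = k
        · simp [hW, hik, hgpos]
        · simp only [hW, if_neg hik]
          exact hipos i (Finset.mem_erase.mpr ⟨hik, mem_univ i⟩)
      have hC := weighted_cauchy univ W Y hWpos
      -- compute the three sums
      have hsY := Finset.sum_erase_add univ Y (mem_univ k)
      have hsYer : ∑ i ∈ univ.erase k, Y i = -(S - d k / (1 + lam k ^ 2)) := by
        have e1 : ∑ i ∈ univ.erase k, Y i = ∑ i ∈ univ.erase k, -(d i / (1 + lam i ^ 2)) :=
          Finset.sum_congr rfl fun i hi => by
            simp [hY, (Finset.mem_erase.mp hi).1]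
        have e2 := Finset.sum_erase_add univ (fun i => d i / (1 + lam i ^ 2)) (mem_univ k)
        rw [e1, Finset.sum_neg_distrib]
        rw [← hS] at e2
        linarith [e2]
      have hsumY : ∑ i, Y i = d k / (1 + lam k ^ 2) := by
        have : Y k = S := by simp [hY]
        rw [← hsY, hsYer, this]; ring
      have hsumWinv : ∑ i, (W i)⁻¹ = g⁻¹ + ∑ i ∈ univ.erase k, (lam i)⁻¹ := by
        have := Finset.sum_erase_add univ (fun i => (W i)⁻¹) (mem_univ k)
        rw [← this]
        have e1 : ∑ i ∈ univ.erase k, (W i)⁻¹ = ∑ i ∈ univ.erase k, (lam i)⁻¹ :=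
          Finset.sum_congr rfl fun i hi => by simp [hW, (Finset.mem_erase.mp hi).1]
        have e2 : (W k)⁻¹ = g⁻¹ := by simp [hW]
        rw [e1, e2]; ring
      set X' := ∑ i ∈ univ.erase k, lam i * d i ^ 2 / (1 + lam i ^ 2) ^ 2 with hX'
      have hsumWY2 : ∑ i, W i * Y i ^ 2 = g * S ^ 2 + X' := by
        have := Finset.sum_erase_add univ (fun i => W i * Y i ^ 2) (mem_univ k)
        rw [← this]
        have e1 : ∑ i ∈ univ.erase k, W i * Y i ^ 2 = X' := by
          apply Finset.sum_congr rfl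
          intro i hi
          have hik := (Finset.mem_erase.mp hi).1
          simp only [hW, hY, if_neg hik, neg_sq]
          exact hX i
        have e2 : W k * Y k ^ 2 = g * S ^ 2 := by simp [hW, hY]
        rw [e1, e2]; ring
      rw [hsumY, hsumWinv, hsumWY2] at hC
      have hX'nn : 0 ≤ X' := Finset.sum_nonneg fun i hi => by
        have := hipos i hi; have := hpos2 i; positivity
      have hwinvpos : 0 < g⁻¹ + ∑ i ∈ univ.erase k, (lam i)⁻¹ := by
        have : 0 ≤ ∑ i ∈ univ.erase k, (lam i)⁻¹ :=
          Finset.sum_nonneg fun i hi => (inv_pos.mpr (hipos i hi)).le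
        have := inv_pos.mpr hgpos
        linarith
      have hRHSnn : 0 ≤ g * S ^ 2 + X' := by
        nlinarith [sq_nonneg (d k / (1 + lam k ^ 2))]
      have hchain : (d k / (1 + lam k ^ 2)) ^ 2 ≤ (-lam k)⁻¹ * (g * S ^ 2 + X') :=
        hC.trans (mul_le_mul_of_nonneg_right hinv2 hRHSnn)
      have hfinal : (-lam k) * (d k / (1 + lam k ^ 2)) ^ 2 ≤ g * S ^ 2 + X' := by
        have := mul_le_mul_of_nonneg_left hchain hlknpos.le
        rwa [← mul_assoc, mul_inv_cancel₀ hlknpos.ne', one_mul] at this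
      -- assemble
      have hsplitX := Finset.sum_erase_add univ
        (fun i => lam i * d i ^ 2 / (1 + lam i ^ 2) ^ 2) (mem_univ k)
      rw [← hsplitX, ← hX']
      have : lam k * d k ^ 2 / (1 + lam k ^ 2) ^ 2
          = -((-lam k) * (d k / (1 + lam k ^ 2)) ^ 2) := by
        rw [div_pow]; ring
      rw [this]
      linarith
    · push_neg at hex
      have h1 : 0 ≤ ∑ i, lam i * d i ^ 2 / (1 + lam i ^ 2) ^ 2 :=
        Finset.sum_nonneg fun i _ => by
          have := hex i; have := hpos2 i; positivity
      have h2 : 0 ≤ g * (∑ i, d i / (1 + lam i ^ 2)) ^ 2 := by positivity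
      linarith

set_option maxHeartbeats 1000000 in
lemma step_convex (n : ℕ) (hn : 1 ≤ n) (σ : ℝ) (hσ : ((n : ℝ) - 1) * (π / 2) ≤ σ)
    (IH : Convex ℝ {l : Fin n → ℝ | σ - π / 2 < ∑ i, arctan (l i)}) :
    Convex ℝ {l : Fin (n + 1) → ℝ | σ < ∑ i, arctan (l i)} := by
  set D : Set (Fin n → ℝ) := {l : Fin n → ℝ | σ - π / 2 < ∑ i, arctan (l i)} with hD
  -- upper bound for sums of n arctans
  have hS_lt : ∀ l : Fin n → ℝ, ∑ i, arctan (l i) < (n : ℝ) * (π / 2) := by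
    intro l
    have hne : (univ : Finset (Fin n)).Nonempty := ⟨⟨0, hn⟩, mem_univ _⟩
    have h1 : ∑ i : Fin n, arctan (l i) < ∑ i : Fin n, π / 2 :=
      Finset.sum_lt_sum_of_nonempty hne (fun i _ => arctan_lt_pi_div_two _)
    rwa [Finset.sum_const, Finset.card_univ, Fintype.card_fin, nsmul_eq_mul] at h1
  have hrange : ∀ l : Fin n → ℝ, l ∈ D → σ - ∑ i, arctan (l i) ∈ Set.Ioo (-(π/2)) (π/2) := by
    intro l hl
    constructor
    · have := hS_lt l; simp only [hD, Set.mem_setOf_eq] at hl ⊢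
      nlinarith [pi_pos]
    · simp only [hD, Set.mem_setOf_eq] at hl; linarith
  -- the tan-lt-iff characterization
  have htan_iff : ∀ θ y : ℝ, θ ∈ Set.Ioo (-(π/2)) (π/2) → (tan θ < y ↔ θ < arctan y) := by
    intro θ y hθ
    constructor
    · intro h
      have h2 := arctan_strictMono h
      rwa [arctan_tan hθ.1 hθ.2] at h2
    · intro h
      have h2 := Real.strictMonoOn_tan hθ
        ⟨neg_pi_div_two_lt_arctan y, arctan_lt_pi_div_two y⟩ h
      rwa [tan_arctan] at h2
  -- membership characterization
  have hmem : ∀ l : Fin (n+1) → ℝ, (σ < ∑ i, arctan (l i)) ↔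
      ((fun i : Fin n => l i.castSucc) ∈ D ∧
        tan (σ - ∑ i : Fin n, arctan (l i.castSucc)) < l (Fin.last n)) := by
    intro l
    rw [Fin.sum_univ_castSucc]
    set A := ∑ i : Fin n, arctan (l i.castSucc) with hA
    constructor
    · intro h
      have hmemD : (fun i : Fin n => l i.castSucc) ∈ D := by
        simp only [hD, Set.mem_setOf_eq]
        have := arctan_lt_pi_div_two (l (Fin.last n))
        rw [← hA]; linarith
      refine ⟨hmemD, ?_⟩
      rw [htan_iff _ _ (hrange _ hmemD)]
      have := hrange _ hmemD
      have h2 : σ - A < arctan (l (Fin.last n)) := by linarith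
      rwa [← arctan_tan (x := arctan (l (Fin.last n))) (neg_pi_div_two_lt_arctan _)
        (arctan_lt_pi_div_two _), arctan_tan (neg_pi_div_two_lt_arctan _)
        (arctan_lt_pi_div_two _)]
    · rintro ⟨hmemD, hlt⟩
      rw [htan_iff _ _ (hrange _ hmemD)] at hlt
      linarith
  -- convexity of G along segments
  have hGconv : ∀ a' b' : Fin n → ℝ, a' ∈ D → b' ∈ D → ∀ t s : ℝ, 0 ≤ t → 0 ≤ s → t + s = 1 →
      tan (σ - ∑ i, arctan (t * a' i + s * b' i))
        ≤ t * tan (σ - ∑ i, arctan (a' i)) + s * tan (σ - ∑ i, arctan (b' i)) := by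
    intro a' b' ha hb t s ht hs hts
    set d : Fin n → ℝ := fun i => b' i - a' i with hd
    set c : ℝ → Fin n → ℝ := fun u i => a' i + u * d i with hc
    have hcD : ∀ u ∈ Set.Icc (0:ℝ) 1, c u ∈ D := by
      intro u hu
      have : c u = (1 - u) • a' + u • b' := by
        funext i; simp [hc, hd]; ring
      rw [this]
      exact IH ha hb (by linarith [hu.2]) hu.1 (by ring)
    set A : ℝ → ℝ := fun u => ∑ i, arctan (c u i) with hAdef
    set A' : ℝ → ℝ := fun u => ∑ i, d i / (1 + c u i ^ 2) with hA'def
    set A'' : ℝ → ℝ := fun u => ∑ i, (-2) * (c u i * d i ^ 2 / (1 + c u i ^ 2) ^ 2)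
      with hA''def
    set φ : ℝ → ℝ := fun u => tan (σ - A u) with hφdef
    have hA : ∀ u, HasDerivAt A (A' u) u := by
      intro u
      apply HasDerivAt.fun_sum
      intro i _
      have h1 : HasDerivAt (fun u : ℝ => a' i + u * d i) (d i) u := by
        simpa using ((hasDerivAt_id u).mul_const (d i)).const_add (a' i)
      have h2 := (Real.hasDerivAt_arctan (c u i)).comp u h1
      refine h2.congr_deriv ?_
      simp [hc]
      try ring
    have hA' : ∀ u, HasDerivAt A' (A'' u) u := by
      intro u
      apply HasDerivAt.fun_sum
      intro i _
      have h1 : HasDerivAt (fun u : ℝ => a' i + u * d i) (d i) u := by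
        simpa using ((hasDerivAt_id u).mul_const (d i)).const_add (a' i)
      have h2 : HasDerivAt (fun u : ℝ => 1 + (a' i + u * d i) ^ 2)
          (2 * (a' i + u * d i) * d i) u := by
        have := (h1.pow 2).const_add 1
        refine this.congr_deriv ?_
        try simp
        try ring
      have h3 : (1 + (a' i + u * d i) ^ 2) ≠ 0 := by positivity
      have h4 := (h2.inv h3).const_mul (d i)
      have h5 : HasDerivAt (fun u : ℝ => d i / (1 + c u i ^ 2))
          (d i * (-(2 * (a' i + u * d i) * d i) / (1 + (a' i + u * d i) ^ 2) ^ 2)) u := by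
        simp only [hc, div_eq_mul_inv]
        exact h4
      refine h5.congr_deriv ?_
      simp only [hc]
      ring
    have hφ : ∀ u ∈ Set.Icc (0:ℝ) 1, HasDerivAt φ ((1 + φ u ^ 2) * (-A' u)) u := by
      intro u hu
      have hr := hrange _ (hcD u hu)
      have hcos : cos (σ - A u) ≠ 0 := (cos_pos_of_mem_Ioo hr).ne'
      have h1 : HasDerivAt (fun u => σ - A u) (-A' u) u := (hA u).const_sub σ
      have h2 := (hasDerivAt_tan hcos).comp u h1
      refine h2.congr_deriv ?_
      have : 1 / cos (σ - A u) ^ 2 = 1 + tan (σ - A u) ^ 2 := by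
        rw [one_div, ← Real.inv_one_add_tan_sq hcos, inv_inv]
      rw [this]
    set ψ : ℝ → ℝ := fun u => (1 + φ u ^ 2) * (-A' u) with hψdef
    set χ : ℝ → ℝ := fun u => (2 * φ u * ψ u) * (-A' u) + (1 + φ u ^ 2) * (-A'' u) with hχdef
    have hψ : ∀ u ∈ Set.Icc (0:ℝ) 1, HasDerivAt ψ (χ u) u := by
      intro u hu
      have h1 : HasDerivAt (fun u => 1 + φ u ^ 2) (2 * φ u * ((1 + φ u ^ 2) * (-A' u))) u := by
        have := ((hφ u hu).pow 2).const_add 1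
        refine this.congr_deriv ?_
        norm_num
        try ring
      have h2 : HasDerivAt (fun u => -A' u) (-A'' u) u := (hA' u).neg
      have := h1.mul h2
      refine this.congr_deriv (by rfl)
      try simp only [hψdef]
      try ring
    -- convexity of φ on [0,1]
    have hconv : ConvexOn ℝ (Set.Icc (0:ℝ) 1) φ := by
      apply convexOn_of_hasDerivWithinAt2_nonneg (convex_Icc 0 1)
        (f' := ψ) (f'' := χ)
      · intro u hu
        exact ((hφ u hu).continuousAt).continuousWithinAt
      · intro u hu
        rw [interior_Icc] at hu
        exact ((hφ u (Set.mem_Icc_of_Ioo hu)).hasDerivWithinAt)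
      · intro u hu
        rw [interior_Icc] at hu
        exact ((hψ u (Set.mem_Icc_of_Ioo hu)).hasDerivWithinAt)
      · intro u hu
        rw [interior_Icc] at hu
        have huI : u ∈ Set.Icc (0:ℝ) 1 := Set.mem_Icc_of_Ioo hu
        have hr := hrange _ (hcD u huI)
        have harctanφ : arctan (φ u) = σ - A u := by
          simp only [hφdef]
          exact arctan_tan hr.1 hr.2
        have hkey := key_ineq n (c u) (φ u) (by
          rw [harctanφ]
          simp only [hAdef]
          have : (∑ i, arctan (c u i)) + (σ - ∑ i, arctan (c u i)) = σ := by ring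
          rw [this]
          exact hσ) d
        have hA''W : A'' u = -2 * ∑ i, c u i * d i ^ 2 / (1 + c u i ^ 2) ^ 2 := by
          simp only [hA''def]
          rw [Finset.mul_sum]
          try exact Finset.sum_congr rfl fun i _ => by ring
        have hexp : χ u = 2 * (1 + φ u ^ 2) *
            (φ u * (A' u) ^ 2 + ∑ i, c u i * d i ^ 2 / (1 + c u i ^ 2) ^ 2) := by
          simp only [hχdef, hψdef]
          rw [hA''W]
          ring
        rw [hexp]
        have h1 : 0 ≤ φ u * (A' u) ^ 2 + ∑ i, c u i * d i ^ 2 / (1 + c u i ^ 2) ^ 2 := hkey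
        nlinarith [sq_nonneg (φ u)]
    -- apply convexity to 0, 1
    have happ := hconv.2 (Set.left_mem_Icc.mpr zero_le_one) (Set.right_mem_Icc.mpr zero_le_one)
      ht hs hts
    have e0 : φ (t • (0:ℝ) + s • 1) = tan (σ - ∑ i, arctan (t * a' i + s * b' i)) := by
      have : t • (0:ℝ) + s • 1 = s := by simp
    -- c s i = a' i + s * (b' i - a' i) = t * a' i + s * b' i  (t = 1 - s)
      rw [this]
      simp only [hφdef, hAdef]
      congr 1
      congr 1
      apply Finset.sum_congr rfl
      intro i _
      congr 1
      simp only [hc, hd]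
      have : t = 1 - s := by linarith
      rw [this]; ring
    have e1 : φ 0 = tan (σ - ∑ i, arctan (a' i)) := by
      simp only [hφdef, hAdef]
      congr 2
      apply Finset.sum_congr rfl
      intro i _
      congr 1
      simp [hc, hd]
    have e2 : φ 1 = tan (σ - ∑ i, arctan (b' i)) := by
      simp only [hφdef, hAdef]
      congr 2
      apply Finset.sum_congr rfl
      intro i _
      congr 1
      simp [hc, hd]
    rw [e0, e1, e2] at happ
    simpa using happ
  -- main convexity argument
  intro a ha b hb t s ht hs hts
  rw [Set.mem_setOf_eq, hmem]
  obtain ⟨ha1, ha2⟩ := (hmem a).mp ha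
  obtain ⟨hb1, hb2⟩ := (hmem b).mp hb
  have hmix_cast : ∀ i : Fin n, (t • a + s • b) i.castSucc = t * a i.castSucc + s * b i.castSucc :=
    fun i => by simp [Pi.smul_apply, smul_eq_mul]
  have hmixD : (fun i : Fin n => (t • a + s • b) i.castSucc) ∈ D := by
    have : (fun i : Fin n => (t • a + s • b) i.castSucc)
        = t • (fun i : Fin n => a i.castSucc) + s • (fun i : Fin n => b i.castSucc) := by
      funext i; simp [Pi.smul_apply, smul_eq_mul]
    rw [this]
    exact IH ha1 hb1 ht hs hts
  refine ⟨hmixD, ?_⟩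
  have hG := hGconv _ _ ha1 hb1 t s ht hs hts
  have hlast : (t • a + s • b) (Fin.last n) = t * a (Fin.last n) + s * b (Fin.last n) := by
    simp [Pi.smul_apply, smul_eq_mul]
  rw [hlast]
  have hsum_eq : (∑ i : Fin n, arctan ((t • a + s • b) i.castSucc))
      = ∑ i : Fin n, arctan (t * a i.castSucc + s * b i.castSucc) :=
    Finset.sum_congr rfl fun (i : Fin n) _ => by rw [hmix_cast i]
  rw [hsum_eq]
  have hstrict : t * tan (σ - ∑ i : Fin n, arctan (a i.castSucc))
      + s * tan (σ - ∑ i : Fin n, arctan (b i.castSucc))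
      < t * a (Fin.last n) + s * b (Fin.last n) := by
    rcases eq_or_lt_of_le ht with h0 | htpos
    · have hs1 : s = 1 := by linarith
      rw [← h0, hs1]
      simpa using hb2
    · exact add_lt_add_of_lt_of_le (mul_lt_mul_of_pos_left ha2 htpos)
        (mul_le_mul_of_nonneg_left hb2.le hs)
  exact hG.trans_lt hstrict

lemma base_convex (σ : ℝ) : Convex ℝ {l : Fin 1 → ℝ | σ < ∑ i, arctan (l i)} := by
  intro x hx y hy t s ht hs hts
  simp only [Set.mem_setOf_eq, Fin.sum_univ_one] at hx hy ⊢
  have hval : (t • x + s • y) 0 = t * x 0 + s * y 0 := by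
    simp [Pi.smul_apply, smul_eq_mul]
  rw [hval]
  rcases le_total (x 0) (y 0) with hxy | hxy
  · have h1 : x 0 ≤ t * x 0 + s * y 0 := by
      have hts' : t = 1 - s := by linarith
      rw [hts']; nlinarith [mul_nonneg hs (sub_nonneg.mpr hxy)]
    calc σ < arctan (x 0) := hx
      _ ≤ arctan (t * x 0 + s * y 0) := arctan_strictMono.monotone h1
  · have h1 : y 0 ≤ t * x 0 + s * y 0 := by
      have hts' : s = 1 - t := by linarith
      rw [hts']; nlinarith [mul_nonneg ht (sub_nonneg.mpr hxy)]
    calc σ < arctan (y 0) := hy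
      _ ≤ arctan (t * x 0 + s * y 0) := arctan_strictMono.monotone h1

lemma aux_convex : ∀ (n : ℕ), 1 ≤ n → ∀ (σ : ℝ), ((n : ℝ) - 2) * π / 2 ≤ σ →
    Convex ℝ {lam : Fin n → ℝ | σ < ∑ i, Real.arctan (lam i)} := by
  intro n
  induction n with
  | zero => omega
  | succ m IH =>
      intro _ σ hσ
      rcases Nat.eq_zero_or_pos m with hm | hm
      · subst hm; exact base_convex σ
      · have hσ' : ((m : ℝ) - 1) * (π / 2) ≤ σ := by
          push_cast at hσ ⊢
          nlinarith [pi_pos]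
        apply step_convex m hm σ hσ'
        apply IH hm
        push_cast
        nlinarith [pi_pos]

/-- Convexity of the supercritical superlevel set
`Γ^σ = { λ ∈ ℝⁿ : ∑ arctan λᵢ > σ }` for `σ ≥ (n-2)π/2`. -/
theorem dHYM_superlevel_set_convex
    (n : ℕ) (hn : 1 ≤ n) (σ : ℝ) (hσ : ((n : ℝ) - 2) * π / 2 ≤ σ) :
    Convex ℝ {lam : Fin n → ℝ | σ < ∑ i, Real.arctan (lam i)} :=
  aux_convex n hn σ hσ
end

section
/- Let n ≥ 2, let t > 0 be a real number, and let λ₁, …, λₙ be real numbers with λᵢ > 0 for all i < n, λₙ < 0, and ∑_{i=1}^n 1/λᵢ ≤ −t. Then for all complex numbers a₁, …, aₙ, one has ∑_{i=1}^n (2·λᵢ/(1+λᵢ²)²)·|aᵢ|² ≥ −(2/t)·|∑_{i=1}^n aᵢ/(1+λᵢ²)|². -/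
open Real Finset

/-!
Put `bᵢ = aᵢ / (1 + λᵢ²)` and let `j` be the index with `λⱼ < 0`; write `R = ∑_{i ≠ j} 1/λᵢ` and
`P = ∑_{i ≠ j} λᵢ ‖bᵢ‖²`. Since `bⱼ = ∑ bᵢ - ∑_{i ≠ j} bᵢ`, Cauchy–Schwarz on the positive indices
and then once more with the weights `t, R` give
`t ‖bⱼ‖² ≤ t (‖∑ bᵢ‖ + ∑_{i ≠ j} ‖bᵢ‖)² ≤ (t + R) (‖∑ bᵢ‖² + t P)`,
while `∑ 1/λᵢ ≤ -t` says exactly `-λⱼ (t + R) ≤ 1`.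
-/

lemma mul_add_sq_le_of_sq_le_mul {t R P x y : ℝ} (ht : 0 < t) (hR : 0 ≤ R) (hP : 0 ≤ P)
    (hy : y ^ 2 ≤ R * P) : t * (x + y) ^ 2 ≤ (t + R) * (x ^ 2 + t * P) := by
  -- AM–GM: `(2txy)² ≤ 4 (t²P) (Rx²)`
  have hxy : 2 * t * x * y ≤ t ^ 2 * P + R * x ^ 2 := by
    refine le_of_sq_le_sq ?_ (by positivity)
    nlinarith [sq_nonneg (t ^ 2 * P - R * x ^ 2),
      mul_le_mul_of_nonneg_left hy (sq_nonneg (2 * t * x))]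
  nlinarith [mul_le_mul_of_nonneg_left hy ht.le]

section

variable {ι E : Type*} [Fintype ι] [DecidableEq ι] [SeminormedAddCommGroup E]

theorem neg_norm_sum_sq_le_mul_sum_mul_norm_sq {t : ℝ} (ht : 0 < t) {lam : ι → ℝ} (j : ι)
    (hpos : ∀ i, i ≠ j → 0 < lam i) (hrec : ∑ i, 1 / lam i ≤ -t) (b : ι → E) :
    -‖∑ i, b i‖ ^ 2 ≤ t * ∑ i, lam i * ‖b i‖ ^ 2 := by
  set s := univ.erase j
  set R := ∑ i ∈ s, 1 / lam i
  set P := ∑ i ∈ s, lam i * ‖b i‖ ^ 2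
  set x := ‖∑ i, b i‖
  set y := ∑ i ∈ s, ‖b i‖
  have hspos : ∀ i ∈ s, 0 < lam i := fun i hi => hpos i (ne_of_mem_erase hi)
  have hR : 0 ≤ R := sum_nonneg fun i hi => (one_div_pos.2 (hspos i hi)).le
  have hP : 0 ≤ P := sum_nonneg fun i hi => mul_nonneg (hspos i hi).le (sq_nonneg _)
  have hCS : y ^ 2 ≤ R * P :=
    sum_sq_le_sum_mul_sum_of_sq_le_mul s (fun i hi => (one_div_pos.2 (hspos i hi)).le)
      (fun i hi => mul_nonneg (hspos i hi).le (sq_nonneg _))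
      (fun i hi => by rw [← mul_assoc, one_div_mul_cancel (hspos i hi).ne', one_mul])
  have hbj : ‖b j‖ ≤ x + y :=
    calc ‖b j‖ = ‖∑ i, b i - ∑ i ∈ s, b i‖ := by rw [← add_sum_erase _ _ (mem_univ j),
            add_sub_cancel_right]
      _ ≤ x + ‖∑ i ∈ s, b i‖ := norm_sub_le _ _
      _ ≤ x + y := by gcongr; exact norm_sum_le _ _
  rw [← add_sum_erase _ _ (mem_univ j)] at hrec ⊢
  have hj : lam j < 0 := one_div_neg.1 (by linarith)
  have hμ : -lam j * (t + R) ≤ 1 := by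
    have := (div_le_iff_of_neg hj).1 (show 1 / lam j ≤ -(t + R) by linarith)
    linarith
  have hbound : t * (-lam j * ‖b j‖ ^ 2) ≤ x ^ 2 + t * P :=
    calc t * (-lam j * ‖b j‖ ^ 2) ≤ -lam j * (t * (x + y) ^ 2) := by
          rw [mul_left_comm]; gcongr; linarith
      _ ≤ -lam j * ((t + R) * (x ^ 2 + t * P)) :=
          mul_le_mul_of_nonneg_left (mul_add_sq_le_of_sq_le_mul ht hR hP hCS) (by linarith)
      _ = -lam j * (t + R) * (x ^ 2 + t * P) := by ring
      _ ≤ x ^ 2 + t * P := mul_le_of_le_one_left (by positivity) hμ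
  linarith

end

lemma norm_div_one_add_ofReal_sq (z : ℂ) (x : ℝ) :
    ‖z / (1 + (x : ℂ) ^ 2)‖ = ‖z‖ / (1 + x ^ 2) := by
  rw [norm_div, show (1 + (x : ℂ) ^ 2) = ((1 + x ^ 2 : ℝ) : ℂ) by push_cast; ring,
    Complex.norm_real, norm_of_nonneg (by positivity)]

/-- The key algebraic inequality (3.27)–(3.30) of the C² estimate: if `λᵢ > 0`
for `i < n`, `λₙ < 0` and `∑ 1/λᵢ ≤ -t` with `t > 0`, then for all complex
numbers `a₁, …, aₙ`,
`∑ (2λᵢ/(1+λᵢ²)²)|aᵢ|² ≥ -(2/t)·|∑ aᵢ/(1+λᵢ²)|²`. -/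
theorem dHYM_weighted_cauchy_schwarz
    (n : ℕ) (t : ℝ) (ht : 0 < t)
    (lam : Fin n → ℝ)
    (hpos : ∀ i : Fin n, (i : ℕ) < n - 1 → 0 < lam i)
    (hrec : ∑ i, 1 / lam i ≤ -t)
    (a : Fin n → ℂ) :
    -(2 / t) * ‖∑ i, a i / (1 + (lam i : ℂ) ^ 2)‖ ^ 2 ≤
      ∑ i, 2 * lam i / (1 + lam i ^ 2) ^ 2 * ‖a i‖ ^ 2 := by
  obtain _ | m := n
  · simp only [univ_eq_empty, sum_empty] at hrec
    linarith
  have key := neg_norm_sum_sq_le_mul_sum_mul_norm_sq ht (Fin.last m)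
    (fun i hi => hpos i (by simpa using Fin.val_lt_last hi)) hrec
    (fun i => a i / (1 + (lam i : ℂ) ^ 2))
  simp only [norm_div_one_add_ofReal_sq] at key
  have hrhs : ∑ i, 2 * lam i / (1 + lam i ^ 2) ^ 2 * ‖a i‖ ^ 2
      = 2 / t * (t * ∑ i, lam i * (‖a i‖ / (1 + lam i ^ 2)) ^ 2) := by
    rw [← mul_assoc, div_mul_cancel₀ _ ht.ne', mul_sum]
    exact sum_congr rfl fun i _ => by rw [div_pow]; ring
  rw [hrhs, neg_mul, ← mul_neg]
  exact mul_le_mul_of_nonneg_left key (by positivity)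
end

section
/- Let n ≥ 1, let μ₁, …, μₙ be real numbers, and let h be a real number with (n−2)·π/2 < h < n·π/2. Then the set { λ' ∈ ℝⁿ : ∑_{i=1}^n arctan(λ'ᵢ) = h and λ'ᵢ ≥ μᵢ for all i } is a bounded subset of ℝⁿ if and only if for every j ∈ {1,…,n} one has ∑_{l ≠ j} arctan(μ_l) > h − π/2. -/
open Real Finset Bornology Filter

/-!
If `λ ≥ μ` and `∑ arctan λᵢ = h`, then
`arctan λⱼ = h - ∑_{l ≠ j} arctan λ_l ≤ h - ∑_{l ≠ j} arctan μ_l`, so when the latter is `< π/2`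
every coordinate is trapped between `μⱼ` and a finite tangent.
Conversely, if `∑_{l ≠ j} arctan μ_l ≤ h - π/2`, then for every large `t` the remaining angle
`h - arctan t` lies in `[∑_{l ≠ j} arctan μ_l, (n - 1)π/2)`, and it is attained by some
`λ_l ≥ μ_l`: moving every angle `arctan μ_l` the same fraction `θ` of the way to `π/2` makes the
angle sum affine in `θ`. Putting `λⱼ = t` gives points of the set with arbitrarily large `j`-th
coordinate.
-/

theorem Real.le_tan_of_arctan_le {x c : ℝ} (h : arctan x ≤ c) (hc : c < π / 2) :
    x ≤ tan c := by
  rwa [← arctan_le_arctan_iff, arctan_tan ((neg_pi_div_two_lt_arctan x).trans_le h) hc]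

theorem PiLp.isBounded_iff_forall_isBounded_image_apply {p : ENNReal} {ι : Type*}
    {β : ι → Type*} [∀ i, Bornology (β i)] {s : Set (PiLp p β)} :
    IsBounded s ↔ ∀ i, IsBounded ((fun x => x i) '' s) := by
  rw [isBounded_induced, ← forall_isBounded_image_eval_iff]
  simp only [Set.image_image]

theorem Real.exists_forall_le_sum_arctan_eq {ι : Type*} (s : Finset ι) (μ : ι → ℝ) {T : ℝ}
    (hlo : ∑ l ∈ s, arctan (μ l) ≤ T) (hhi : T < #s * (π / 2)) :
    ∃ ν : ι → ℝ, (∀ l, μ l ≤ ν l) ∧ ∑ l ∈ s, arctan (ν l) = T := by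
  set D := ∑ l ∈ s, (π / 2 - arctan (μ l))
  have hD : #s * (π / 2) - ∑ l ∈ s, arctan (μ l) = D := by
    simp [D, sum_sub_distrib]
  set θ := (T - ∑ l ∈ s, arctan (μ l)) / D
  have hθ0 : 0 ≤ θ := div_nonneg (by linarith) (by linarith)
  have hθ1 : θ < 1 := (div_lt_one (by linarith)).2 (by linarith)
  set β : ι → ℝ := fun l => arctan (μ l) + θ * (π / 2 - arctan (μ l))
  have hβ_ge (l : ι) : arctan (μ l) ≤ β l :=
    le_add_of_nonneg_right (mul_nonneg hθ0 (sub_nonneg.2 (arctan_lt_pi_div_two _).le))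
  have hβ_lt (l : ι) : β l < π / 2 := by
    have := mul_lt_mul_of_pos_right hθ1 (sub_pos.2 (arctan_lt_pi_div_two (μ l)))
    simp only [β]
    linarith
  have harctan (l : ι) : arctan (tan (β l)) = β l :=
    arctan_tan ((neg_pi_div_two_lt_arctan _).trans_le (hβ_ge l)) (hβ_lt l)
  refine ⟨fun l => tan (β l), fun l => ?_, ?_⟩
  · rw [← arctan_le_arctan_iff, harctan]
    exact hβ_ge l
  · simp only [harctan, β, sum_add_distrib, ← mul_sum]
    rw [div_mul_cancel₀ _ (by linarith)]
    ring

variable {ι : Type*} [Fintype ι]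

def arctanLevelSetAbove (μ : ι → ℝ) (h : ℝ) : Set (EuclideanSpace ℝ ι) :=
  {lam | ∑ i, arctan (lam i) = h ∧ ∀ i, μ i ≤ lam i}

variable [DecidableEq ι] {μ : ι → ℝ} {h : ℝ}

theorem le_tan_of_mem_arctanLevelSetAbove {x : EuclideanSpace ℝ ι}
    (hx : x ∈ arctanLevelSetAbove μ h) {i : ι}
    (hi : h - π / 2 < ∑ l ∈ univ.erase i, arctan (μ l)) :
    x i ≤ tan (h - ∑ l ∈ univ.erase i, arctan (μ l)) := by
  obtain ⟨hsum, hμx⟩ := hx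
  have hrest : ∑ l ∈ univ.erase i, arctan (μ l) ≤ ∑ l ∈ univ.erase i, arctan (x l) :=
    sum_le_sum fun l _ => arctan_mono (hμx l)
  rw [← add_sum_erase _ _ (mem_univ i)] at hsum
  exact le_tan_of_arctan_le (by linarith) (by linarith)

theorem isBounded_arctanLevelSetAbove
    (hμ : ∀ j, h - π / 2 < ∑ l ∈ univ.erase j, arctan (μ l)) :
    IsBounded (arctanLevelSetAbove μ h) := by
  refine PiLp.isBounded_iff_forall_isBounded_image_apply.2 fun i =>
    (Metric.isBounded_Icc (μ i) (tan (h - ∑ l ∈ univ.erase i, arctan (μ l)))).subset ?_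
  rintro _ ⟨x, hx, rfl⟩
  exact ⟨hx.2 i, le_tan_of_mem_arctanLevelSetAbove hx (hμ i)⟩

theorem exists_Ici_subset_image_apply_arctanLevelSetAbove {j : ι}
    (hj : ∑ l ∈ univ.erase j, arctan (μ l) ≤ h - π / 2)
    (hh : h < Fintype.card ι * (π / 2)) :
    ∃ t₀, Set.Ici t₀ ⊆ (fun x => x j) '' arctanLevelSetAbove μ h := by
  have hcard : (#(univ.erase j) : ℝ) * (π / 2) + π / 2 = Fintype.card ι * (π / 2) := by
    rw [← card_univ, ← card_erase_add_one (mem_univ j)]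
    push_cast
    ring
  have hlarge : ∀ᶠ t in atTop, h - #(univ.erase j) * (π / 2) < arctan t :=
    (tendsto_arctan_atTop.mono_right nhdsWithin_le_nhds).eventually (lt_mem_nhds (by linarith))
  obtain ⟨t₀, ht₀⟩ := ((eventually_ge_atTop (μ j)).and hlarge).exists_forall_of_atTop
  refine ⟨t₀, fun t ht => ?_⟩
  obtain ⟨hμt, hat⟩ := ht₀ t ht
  obtain ⟨ν, hμν, hν⟩ := exists_forall_le_sum_arctan_eq (univ.erase j) μ (T := h - arctan t)
    (by linarith [arctan_lt_pi_div_two t]) (by linarith)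
  refine ⟨WithLp.toLp 2 (Function.update ν j t), ⟨?_, fun i => ?_⟩, by simp⟩
  · have hrest : ∑ l ∈ univ.erase j, arctan (Function.update ν j t l) =
        ∑ l ∈ univ.erase j, arctan (ν l) :=
      sum_congr rfl fun l hl => by rw [Function.update_of_ne (ne_of_mem_erase hl)]
    rw [← add_sum_erase _ _ (mem_univ j)]
    simp only [Function.update_self, hrest, hν]
    ring
  · rcases eq_or_ne i j with rfl | hij
    · simpa using hμt
    · simpa [hij] using hμν i

theorem not_isBounded_arctanLevelSetAbove {j : ι}
    (hj : ∑ l ∈ univ.erase j, arctan (μ l) ≤ h - π / 2)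
    (hh : h < Fintype.card ι * (π / 2)) :
    ¬ IsBounded (arctanLevelSetAbove μ h) := by
  intro hb
  obtain ⟨t₀, ht₀⟩ := exists_Ici_subset_image_apply_arctanLevelSetAbove hj hh
  have hj_bdd := PiLp.isBounded_iff_forall_isBounded_image_apply.1 hb j
  exact not_bddAbove_Ici t₀ ((isBounded_iff_bddBelow_bddAbove.1 hj_bdd).2.mono ht₀)

theorem isBounded_arctanLevelSetAbove_iff (μ : ι → ℝ) (hh : h < Fintype.card ι * (π / 2)) :
    IsBounded (arctanLevelSetAbove μ h) ↔ ∀ j, h - π / 2 < ∑ l ∈ univ.erase j, arctan (μ l) :=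
  ⟨fun hb j => not_le.1 fun hj => not_isBounded_arctanLevelSetAbove (j := j) hj hh hb,
    isBounded_arctanLevelSetAbove⟩

theorem dHYM_C_subsolution_characterization_general
    (n : ℕ) (μ : Fin n → ℝ) (h : ℝ)
    (h2 : h < (n : ℝ) * π / 2) :
    Bornology.IsBounded {lam : EuclideanSpace ℝ (Fin n) |
        (∑ i, Real.arctan (lam i) = h) ∧ ∀ i, μ i ≤ lam i} ↔
      ∀ j : Fin n, h - π / 2 < ∑ l ∈ Finset.univ.erase j, Real.arctan (μ l) :=
  isBounded_arctanLevelSetAbove_iff μ (by rwa [Fintype.card_fin, ← mul_div_assoc])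

/-- Collins–Jacob–Yau's pointwise characterization of a C-subsolution (Lemma 2.4):
the set `{ λ' : ∑ arctan λ'ᵢ = h, λ'ᵢ ≥ μᵢ }` is bounded iff
`∑_{l ≠ j} arctan μ_l > h - π/2` for every `j`. -/
theorem dHYM_C_subsolution_characterization
    (n : ℕ) (hn : 1 ≤ n) (μ : Fin n → ℝ) (h : ℝ)
    (h1 : ((n : ℝ) - 2) * π / 2 < h) (h2 : h < (n : ℝ) * π / 2) :
    Bornology.IsBounded {lam : EuclideanSpace ℝ (Fin n) |
        (∑ i, Real.arctan (lam i) = h) ∧ ∀ i, μ i ≤ lam i} ↔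
      ∀ j : Fin n, h - π / 2 < ∑ l ∈ Finset.univ.erase j, Real.arctan (μ l) :=
  dHYM_C_subsolution_characterization_general n μ h h2
end
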